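/- Let G be a simple graph that is K_4-free and ⟨P2P3⟩-free, in which every edge belongs to at least two triangles. Let u be a vertex of G. Then: (i) for every edge {a,b} of the induced subgraph G[N(u)] there exists a vertex v ∈ V(G) ∖ (N(u) ∪ {u}) adjacent to both a and b; and (ii) no single vertex v ∈ V(G) ∖ (N(u) ∪ {u}) is adjacent to both endpoints of each of two distinct edges of G[N(u)], so the vertices v corresponding to distinct edges of G[N(u)] are distinct. (Theorem 1.1, part 4.) -/
import Mathlib


/-- `G` is `H`-free: `G` contains no (not necessarily induced) subgraph isomorphic to `H`,
i.e. there is no injective graph homomorphism from `H` to `G`. -/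
def HFree {W V : Type*} (H : SimpleGraph W) (G : SimpleGraph V) : Prop :=
  ¬ ∃ f : H →g G, Function.Injective f

/-- `P₂ ∪ P₃`: the disjoint union of an edge (`0-1`) and a two-edge path (`2-3-4`). -/
def P2P3 : SimpleGraph (Fin 5) :=
  SimpleGraph.fromRel (fun i j => (i = 0 ∧ j = 1) ∨ (i = 2 ∧ j = 3) ∨ (i = 3 ∧ j = 4))

/-- `⟨P2P3⟩`: the complement of `P₂ ∪ P₃`. -/
def P2P3bar : SimpleGraph (Fin 5) := P2P3ᶜ

/-- `K₄`, the complete graph on four vertices. -/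
def K4 : SimpleGraph (Fin 4) := ⊤

lemma noK4 {V : Type*} {G : SimpleGraph V} (h1 : HFree K4 G) {a b c d : V}
    (hab : G.Adj a b) (hac : G.Adj a c) (had : G.Adj a d)
    (hbc : G.Adj b c) (hbd : G.Adj b d) (hcd : G.Adj c d) : False := by
  apply h1
  refine ⟨⟨![a,b,c,d], ?_⟩, ?_⟩
  · intro i j hij
    fin_cases i <;> fin_cases j <;>
      first
      | exact absurd rfl (K4.ne_of_adj hij)
      | exact hab | exact hab.symm | exact hac | exact hac.symm
      | exact had | exact had.symm | exact hbc | exact hbc.symm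
      | exact hbd | exact hbd.symm | exact hcd | exact hcd.symm
  · intro i j hij
    by_contra hne
    fin_cases i <;> fin_cases j <;>
      first
      | exact hne rfl
      | exact G.ne_of_adj hab hij | exact G.ne_of_adj hab.symm hij
      | exact G.ne_of_adj hac hij | exact G.ne_of_adj hac.symm hij
      | exact G.ne_of_adj had hij | exact G.ne_of_adj had.symm hij
      | exact G.ne_of_adj hbc hij | exact G.ne_of_adj hbc.symm hij
      | exact G.ne_of_adj hbd hij | exact G.ne_of_adj hbd.symm hij
      | exact G.ne_of_adj hcd hij | exact G.ne_of_adj hcd.symm hij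

lemma noBar {V : Type*} {G : SimpleGraph V} (h2 : HFree P2P3bar G) {u v a e b : V}
    (huv : u ≠ v) (hae : a ≠ e) (heb : e ≠ b)
    (hua : G.Adj u a) (hue : G.Adj u e) (hub : G.Adj u b)
    (hva : G.Adj v a) (hve : G.Adj v e) (hvb : G.Adj v b)
    (hab : G.Adj a b) : False := by
  apply h2
  refine ⟨⟨![u,v,a,e,b], ?_⟩, ?_⟩
  · intro i j hij
    fin_cases i <;> fin_cases j <;>
      first
      | exact hua | exact hua.symm | exact hue | exact hue.symm
      | exact hub | exact hub.symm | exact hva | exact hva.symm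
      | exact hve | exact hve.symm | exact hvb | exact hvb.symm
      | exact hab | exact hab.symm
      | (exfalso;
         simp only [P2P3bar, P2P3, SimpleGraph.compl_adj, SimpleGraph.fromRel_adj] at hij;
         revert hij; decide)
  · intro i j hij
    by_contra hne
    fin_cases i <;> fin_cases j <;>
      first
      | exact hne rfl
      | exact huv hij | exact huv hij.symm
      | exact hae hij | exact hae hij.symm
      | exact heb hij | exact heb hij.symm
      | exact G.ne_of_adj hua hij | exact G.ne_of_adj hua.symm hij
      | exact G.ne_of_adj hue hij | exact G.ne_of_adj hue.symm hij
      | exact G.ne_of_adj hub hij | exact G.ne_of_adj hub.symm hij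
      | exact G.ne_of_adj hva hij | exact G.ne_of_adj hva.symm hij
      | exact G.ne_of_adj hve hij | exact G.ne_of_adj hve.symm hij
      | exact G.ne_of_adj hvb hij | exact G.ne_of_adj hvb.symm hij
      | exact G.ne_of_adj hab hij | exact G.ne_of_adj hab.symm hij

theorem stmt_11 {V : Type*} (G : SimpleGraph V)
    (h1 : HFree K4 G) (h2 : HFree P2P3bar G)
    (htri : ∀ x y : V, G.Adj x y → ∃ z w : V, z ≠ w ∧
      G.Adj x z ∧ G.Adj y z ∧ G.Adj x w ∧ G.Adj y w)
    (u : V) :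
    -- (i) every edge `{a, b}` of `G[N(u)]` has a common neighbor outside `N(u) ∪ {u}`
    (∀ a b : V, G.Adj u a → G.Adj u b → G.Adj a b →
      ∃ v : V, v ∉ G.neighborSet u ∧ v ≠ u ∧ G.Adj v a ∧ G.Adj v b) ∧
    -- (ii) no such vertex works for two distinct edges of `G[N(u)]`
    (∀ v : V, v ∉ G.neighborSet u → v ≠ u →
      ∀ a b c d : V, G.Adj u a → G.Adj u b → G.Adj u c → G.Adj u d →
        G.Adj a b → G.Adj c d → s(a, b) ≠ s(c, d) →
        ¬ (G.Adj v a ∧ G.Adj v b ∧ G.Adj v c ∧ G.Adj v d)) := by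
  constructor
  · intro a b hua hub hab
    obtain ⟨z, w, hzw, haz, hbz, haw, hbw⟩ := htri a b hab
    have key : ∀ t : V, G.Adj a t → G.Adj b t → ¬ G.Adj u t := by
      intro t hat hbt hut
      exact noK4 h1 hua hub hut hab hat hbt
    rcases eq_or_ne z u with rfl | hz
    · refine ⟨w, key w haw hbw, hzw.symm, haw.symm, hbw.symm⟩
    · exact ⟨z, key z haz hbz, hz, haz.symm, hbz.symm⟩
  · intro v _ hvu a b c d hua hub huc hud hab hcd hne
    rintro ⟨hva, hvb, hvc, hvd⟩
    -- find e ∈ {c, d} with e ≠ a and e ≠ b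
    have hcd' : c ≠ d := G.ne_of_adj hcd
    have : ∃ e : V, e ≠ a ∧ e ≠ b ∧ G.Adj u e ∧ G.Adj v e := by
      by_cases hca : c = a
      · subst hca
        refine ⟨d, fun h => hcd' h.symm, ?_, hud, hvd⟩
        · intro h; exact hne (by rw [h])
      · by_cases hcb : c = b
        · subst hcb
          refine ⟨d, ?_, fun h => hcd' h.symm, hud, hvd⟩
          · intro h; exact hne (by rw [h, Sym2.eq_swap])
        · exact ⟨c, hca, hcb, huc, hvc⟩
    obtain ⟨e, hea, heb, hue, hve⟩ := this
    exact noBar h2 hvu.symm (Ne.symm hea) heb hua hue hub hva hve hvb hab
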